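/- arXiv:1809.06816 — 2 statements merged into one kernel-verified Lean document; each statement's English description precedes it below -/
import Mathlib

section
/- The product 𝔸 × 2^ω of the double arrow space with the Cantor set is not countable dense homogeneous. -/
open Set Topology

def DoubleArrow : Type :=
  {p : ℝ ×ₗ Bool // ((ofLex p).2 = false ∧ (ofLex p).1 ∈ Set.Ioc (0:ℝ) 1) ∨
    ((ofLex p).2 = true ∧ (ofLex p).1 ∈ Set.Ico (0:ℝ) 1)}

noncomputable instance : LinearOrder DoubleArrow := Subtype.instLinearOrder _
noncomputable instance : TopologicalSpace DoubleArrow := Preorder.topology DoubleArrow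
instance : OrderTopology DoubleArrow := ⟨rfl⟩

/-- Countable dense homogeneity. -/
def CDH (X : Type*) [TopologicalSpace X] : Prop :=
  ∀ D E : Set X, D.Countable → Dense D → E.Countable → Dense E →
    ∃ h : X ≃ₜ X, h '' D = E

/-!
Let `Q` be countable dense in `2^ω` and let `E` be a countable dense subset of `𝔸 × 2^ω` meeting
every fiber `{x} × 2^ω` at most once; it exists because `𝔸` has a countable π-base of sets
carrying continuum many first coordinates. Suppose a homeomorphism `h` carries `D × Q` onto `E`,
for some countable dense `D ⊆ 𝔸`, and fix `a ∈ D`. The continuous map `y ↦ (h (a, y)).1` from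
`2^ω` to `𝔸` has countable range: every `x ∈ 𝔸` has `(←, x]` or `[x, →)` clopen, and distinct
such points have distinct clopen preimages, of which `2^ω` has only countably many. By Baire
category one fiber of this map has interior, hence contains two points of `Q`, and `h` sends them
to two points of `E` in one fiber.
-/

open Filter

theorem countable_setOf_isClopen (X : Type*) [TopologicalSpace X] [CompactSpace X]
    [SecondCountableTopology X] : {s : Set X | IsClopen s}.Countable := by
  let B := TopologicalSpace.countableBasis X
  have : Countable B := (TopologicalSpace.countable_countableBasis X).to_subtype
  refine (countable_range fun t : Finset B => ((t : Set B) : Set (Set X)).sUnion).mono ?_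
  intro s hs
  obtain ⟨t, ht⟩ := eq_sUnion_finset_of_isTopologicalBasis_of_isCompact_open B
    (TopologicalSpace.isBasis_countableBasis X) s hs.isClosed.isCompact hs.isOpen
  exact ⟨t, ht.symm⟩

theorem countable_range_inter_setOf_isOpen_Iic {X Y : Type*} [TopologicalSpace X]
    [TopologicalSpace Y] [LinearOrder Y] [ClosedIicTopology Y]
    (hX : {s : Set X | IsClopen s}.Countable) {f : X → Y} (hf : Continuous f) :
    (range f ∩ {y | IsOpen (Iic y)}).Countable := by
  refine MapsTo.countable_of_injOn (f := fun y => f ⁻¹' Iic y) ?_ ?_ hX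
  · exact fun y hy => ⟨isClosed_Iic.preimage hf, hy.2.preimage hf⟩
  · rintro _ ⟨⟨x₁, rfl⟩, -⟩ _ ⟨⟨x₂, rfl⟩, -⟩ (h : f ⁻¹' Iic (f x₁) = f ⁻¹' Iic (f x₂))
    have h₁ : x₁ ∈ f ⁻¹' Iic (f x₂) := h ▸ le_refl (f x₁)
    have h₂ : x₂ ∈ f ⁻¹' Iic (f x₁) := h ▸ le_refl (f x₂)
    exact le_antisymm h₁ h₂

theorem countable_range_inter_setOf_isOpen_Ici {X Y : Type*} [TopologicalSpace X]
    [TopologicalSpace Y] [LinearOrder Y] [ClosedIciTopology Y]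
    (hX : {s : Set X | IsClopen s}.Countable) {f : X → Y} (hf : Continuous f) :
    (range f ∩ {y | IsOpen (Ici y)}).Countable :=
  countable_range_inter_setOf_isOpen_Iic (Y := Yᵒᵈ) hX (f := OrderDual.toDual ∘ f) hf

instance Pi.perfectSpace {ι : Type*} {π : ι → Type*} [Infinite ι] [∀ i, TopologicalSpace (π i)]
    [∀ i, Nontrivial (π i)] : PerfectSpace (∀ i, π i) := by
  classical
  refine perfectSpace_iff_forall_not_isolated.2 fun x => ?_
  choose y hy using fun i => exists_ne (x i)
  have hlim : Tendsto (fun n => Function.update x n (y n)) cofinite (𝓝[≠] x) := by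
    refine tendsto_nhdsWithin_iff.2 ⟨tendsto_pi_nhds.2 fun i => ?_, Eventually.of_forall
      fun n h => hy n (by simpa using congrFun h n)⟩
    refine tendsto_const_nhds.congr' ?_
    filter_upwards [eventually_cofinite_ne i] with n hn
    simp [Function.update_of_ne hn.symm]
  exact hlim.neBot

theorem exists_ne_map_eq_of_countable_range {X Y : Type*} [TopologicalSpace X] [BaireSpace X]
    [T1Space X] [Nonempty X] [PerfectSpace X] [TopologicalSpace Y] [T1Space Y] {f : X → Y}
    (hf : Continuous f) (hrange : (range f).Countable) {D : Set X} (hD : Dense D) :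
    ∃ d₁ ∈ D, ∃ d₂ ∈ D, d₁ ≠ d₂ ∧ f d₁ = f d₂ := by
  have : Countable (range f) := hrange.to_subtype
  obtain ⟨y, hU⟩ := nonempty_interior_of_iUnion_of_closed (f := fun y : range f => f ⁻¹' {(y : Y)})
    (fun _ => isClosed_singleton.preimage hf)
    (eq_univ_of_forall fun x => mem_iUnion.2 ⟨⟨f x, mem_range_self x⟩, rfl⟩)
  obtain ⟨d₁, hd₁U, hd₁D⟩ := hD.inter_open_nonempty _ isOpen_interior hU
  obtain ⟨d₂, hd₂U, hd₂D, hne⟩ := (hD.sdiff_singleton d₁).inter_open_nonempty _ isOpen_interior hU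
  have h₁ : f d₁ = y := interior_subset (s := f ⁻¹' {(y : Y)}) hd₁U
  have h₂ : f d₂ = y := interior_subset (s := f ⁻¹' {(y : Y)}) hd₂U
  exact ⟨d₁, hd₁D, d₂, hd₂D, Ne.symm hne, h₁.trans h₂.symm⟩

theorem dense_range_ratCast_add_mul_sqrt_two (n : ℕ) :
    Dense (range fun r : ℚ => (r : ℝ) + n * √2) :=
  (add_right_surjective (n * √2)).denseRange.comp Rat.denseRange_cast (continuous_add_const _)

theorem eq_of_ratCast_add_mul_sqrt_two_eq {r s : ℚ} {m n : ℕ}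
    (h : (r : ℝ) + m * √2 = s + n * √2) : m = n := by
  by_contra hmn
  have hmn' : (m : ℝ) - n ≠ 0 := sub_ne_zero.2 (by exact_mod_cast hmn)
  refine irrational_sqrt_two ⟨(s - r) / (m - n), ?_⟩
  push_cast
  field_simp
  linarith

namespace DoubleArrow

def fst (x : DoubleArrow) : ℝ := (ofLex x.1).1

def snd (x : DoubleArrow) : Bool := (ofLex x.1).2

def lower (t : ℝ) (ht : t ∈ Ioc 0 1) : DoubleArrow := ⟨toLex (t, false), Or.inl ⟨rfl, ht⟩⟩

def upper (t : ℝ) (ht : t ∈ Ico 0 1) : DoubleArrow := ⟨toLex (t, true), Or.inr ⟨rfl, ht⟩⟩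

instance : Nonempty DoubleArrow := ⟨lower 1 ⟨one_pos, le_rfl⟩⟩

lemma snd_lower (t : ℝ) (ht : t ∈ Ioc 0 1) : (lower t ht).snd = false := rfl
lemma snd_upper (t : ℝ) (ht : t ∈ Ico 0 1) : (upper t ht).snd = true := rfl

lemma fst_mem_Ioc_of_snd_eq_false {x : DoubleArrow} (h : x.snd = false) : x.fst ∈ Ioc 0 1 := by
  rcases x.2 with ⟨-, hx⟩ | ⟨hs, -⟩
  · exact hx
  · exact absurd (h.symm.trans hs) Bool.false_ne_true

lemma fst_mem_Ico_of_snd_eq_true {x : DoubleArrow} (h : x.snd = true) : x.fst ∈ Ico 0 1 := by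
  rcases x.2 with ⟨hs, -⟩ | ⟨-, hx⟩
  · exact absurd (h.symm.trans hs) Bool.false_ne_true.symm
  · exact hx

lemma fst_mem_Icc (x : DoubleArrow) : x.fst ∈ Icc 0 1 := by
  rcases x.2 with ⟨-, hx⟩ | ⟨-, hx⟩
  exacts [Ioc_subset_Icc_self hx, Ico_subset_Icc_self hx]

lemma lt_iff {x y : DoubleArrow} : x < y ↔ x.fst < y.fst ∨ x.fst = y.fst ∧ x.snd < y.snd :=
  Prod.Lex.lt_iff

lemma le_iff {x y : DoubleArrow} : x ≤ y ↔ x.fst < y.fst ∨ x.fst = y.fst ∧ x.snd ≤ y.snd :=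
  Prod.Lex.le_iff

lemma lt_of_fst_lt {x y : DoubleArrow} (h : x.fst < y.fst) : x < y := lt_iff.2 (Or.inl h)

lemma fst_lt_of_lt_of_snd_eq_false {x y : DoubleArrow} (h : x < y) (hy : y.snd = false) :
    x.fst < y.fst := by
  rcases lt_iff.1 h with h | ⟨-, h⟩
  · exact h
  · exact absurd (hy ▸ h) not_lt_bot

lemma fst_lt_of_lt_of_snd_eq_true {x y : DoubleArrow} (h : x < y) (hx : x.snd = true) :
    x.fst < y.fst := by
  rcases lt_iff.1 h with h | ⟨-, h⟩
  · exact h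
  · exact absurd (hx ▸ h) not_top_lt

lemma covBy_of_fst_eq {x y : DoubleArrow} (hx : x.snd = false) (hy : y.snd = true)
    (h : x.fst = y.fst) : x ⋖ y := by
  refine ⟨lt_iff.2 (Or.inr ⟨h, by simp [hx, hy]⟩), fun z hxz hzy => ?_⟩
  rcases lt_iff.1 hxz with h₁ | ⟨h₁, h₁'⟩ <;> rcases lt_iff.1 hzy with h₂ | ⟨h₂, h₂'⟩
  · linarith
  · linarith
  · linarith
  · rw [hx] at h₁'
    rw [hy] at h₂'
    revert h₁' h₂'
    cases z.snd <;> decide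

lemma snd_eq_false_of_fst_eq_one {x : DoubleArrow} (h : x.fst = 1) : x.snd = false := by
  cases hs : x.snd
  · rfl
  · linarith [(fst_mem_Ico_of_snd_eq_true hs).2]

lemma snd_eq_true_of_fst_eq_zero {x : DoubleArrow} (h : x.fst = 0) : x.snd = true := by
  cases hs : x.snd
  · linarith [(fst_mem_Ioc_of_snd_eq_false hs).1]
  · rfl

lemma isTop_of_fst_eq_one {x : DoubleArrow} (h : x.fst = 1) : IsTop x := fun z => by
  rcases (fst_mem_Icc z).2.lt_or_eq with hz | hz
  · exact (lt_of_fst_lt (hz.trans_eq h.symm)).le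
  · exact le_iff.2 (Or.inr ⟨hz.trans h.symm, by
      rw [snd_eq_false_of_fst_eq_one hz, snd_eq_false_of_fst_eq_one h]⟩)

lemma isBot_of_fst_eq_zero {x : DoubleArrow} (h : x.fst = 0) : IsBot x := fun z => by
  rcases (fst_mem_Icc z).1.lt_or_eq with hz | hz
  · exact (lt_of_fst_lt (h.trans_lt hz)).le
  · exact le_iff.2 (Or.inr ⟨h.trans hz, by
      rw [snd_eq_true_of_fst_eq_zero hz.symm, snd_eq_true_of_fst_eq_zero h]⟩)

lemma isOpen_Iic_or_isOpen_Ici (x : DoubleArrow) : IsOpen (Iic x) ∨ IsOpen (Ici x) := by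
  cases hs : x.snd
  · left
    obtain ⟨h₀, h₁⟩ := fst_mem_Ioc_of_snd_eq_false hs
    rcases h₁.lt_or_eq with h₁ | h₁
    · rw [← (covBy_of_fst_eq hs (snd_upper _ ⟨h₀.le, h₁⟩) rfl).Iio_eq]
      exact isOpen_Iio
    · rw [(isTop_of_fst_eq_one h₁).Iic_eq]
      exact isOpen_univ
  · right
    obtain ⟨h₀, h₁⟩ := fst_mem_Ico_of_snd_eq_true hs
    rcases h₀.lt_or_eq with h₀ | h₀
    · rw [← (covBy_of_fst_eq (snd_lower _ ⟨h₀, h₁.le⟩) hs rfl).Ioi_eq]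
      exact isOpen_Ioi
    · rw [(isBot_of_fst_eq_zero h₀.symm).Ici_eq]
      exact isOpen_univ

lemma exists_Ioo_subset_of_mem_nhds_fst_lt {U : Set DoubleArrow} {x : DoubleArrow}
    (hU : U ∈ 𝓝 x) :
    ∃ a b : DoubleArrow, a.fst < b.fst ∧ Ioo a b ⊆ U := by
  cases hs : x.snd
  · obtain ⟨a, hax, hsub⟩ := exists_Ioc_subset_of_mem_nhds hU
      ⟨upper 0 ⟨le_rfl, one_pos⟩, lt_of_fst_lt (fst_mem_Ioc_of_snd_eq_false hs).1⟩
    exact ⟨a, x, fst_lt_of_lt_of_snd_eq_false hax hs, Ioo_subset_Ioc_self.trans hsub⟩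
  · obtain ⟨b, hxb, hsub⟩ := exists_Ico_subset_of_mem_nhds hU
      ⟨lower 1 ⟨one_pos, le_rfl⟩, lt_of_fst_lt (fst_mem_Ico_of_snd_eq_true hs).2⟩
    exact ⟨x, b, fst_lt_of_lt_of_snd_eq_true hxb hs, Ioo_subset_Ico_self.trans hsub⟩

lemma fst_preimage_Ioo_subset (a b : DoubleArrow) : fst ⁻¹' Ioo a.fst b.fst ⊆ Ioo a b :=
  fun _ hz => ⟨lt_of_fst_lt hz.1, lt_of_fst_lt hz.2⟩

lemma exists_rat_fst_preimage_Ioo_subset {U : Set DoubleArrow} (hU : IsOpen U)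
    (hne : U.Nonempty) : ∃ p q : ℚ, 0 ≤ p ∧ p < q ∧ q ≤ 1 ∧ fst ⁻¹' Ioo (p : ℝ) q ⊆ U := by
  obtain ⟨x, hx⟩ := hne
  obtain ⟨a, b, hab, hsub⟩ := exists_Ioo_subset_of_mem_nhds_fst_lt (hU.mem_nhds hx)
  obtain ⟨p, hap, hpb⟩ := exists_rat_btwn hab
  obtain ⟨q, hpq, hqb⟩ := exists_rat_btwn hpb
  refine ⟨p, q, ?_, by exact_mod_cast hpq, ?_, ?_⟩
  · exact_mod_cast (fst_mem_Icc a).1.trans hap.le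
  · exact_mod_cast hqb.le.trans (fst_mem_Icc b).2
  · exact (preimage_mono (Ioo_subset_Ioo hap.le hqb.le)).trans
      ((fst_preimage_Ioo_subset a b).trans hsub)

theorem countable_range_of_continuous {X : Type*} [TopologicalSpace X] [CompactSpace X]
    [SecondCountableTopology X] {f : X → DoubleArrow} (hf : Continuous f) :
    (range f).Countable := by
  have hX := countable_setOf_isClopen X
  refine ((countable_range_inter_setOf_isOpen_Iic hX hf).union
    (countable_range_inter_setOf_isOpen_Ici hX hf)).mono fun y hy => ?_
  rcases isOpen_Iic_or_isOpen_Ici y with h | h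
  exacts [Or.inl ⟨hy, h⟩, Or.inr ⟨hy, h⟩]

theorem exists_countable_dense_injOn_fst (Y : Type*) [TopologicalSpace Y]
    [TopologicalSpace.SeparableSpace Y] :
    ∃ E : Set (DoubleArrow × Y), E.Countable ∧ Dense E ∧ InjOn Prod.fst E := by
  obtain ⟨Q, hQc, hQd⟩ := TopologicalSpace.exists_countable_dense Y
  have := hQc.to_subtype
  let J := {pq : ℚ × ℚ // 0 ≤ pq.1 ∧ pq.1 < pq.2 ∧ pq.2 ≤ 1} × Q
  obtain ⟨ι, hι⟩ := exists_injective_nat J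
  -- The sets `ℚ + n √2` are pairwise disjoint and dense, so drawing the `j`-th first coordinate
  -- from `ℚ + (ι j) √2` makes the first coordinates pairwise distinct.
  have ht : ∀ j : J, ∃ t ∈ range (fun r : ℚ => (r : ℝ) + ι j * √2),
      t ∈ Ioo (j.1.1.1 : ℝ) j.1.1.2 := fun j =>
    (dense_range_ratCast_add_mul_sqrt_two (ι j)).exists_between (by exact_mod_cast j.1.2.2.1)
  choose t ht_mem ht_Ioo using ht
  have ht_Ioc : ∀ j, t j ∈ Ioc 0 1 := fun j =>
    ⟨lt_of_le_of_lt (by exact_mod_cast j.1.2.1) (ht_Ioo j).1,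
      (ht_Ioo j).2.le.trans (by exact_mod_cast j.1.2.2.2)⟩
  let e : J → DoubleArrow × Y := fun j => (lower (t j) (ht_Ioc j), j.2)
  refine ⟨range e, countable_range e, ?_, ?_⟩
  · refine dense_iff_inter_open.2 fun W hW ⟨⟨x, y⟩, hxy⟩ => ?_
    obtain ⟨U, V, hU, hV, hxU, hyV, hUV⟩ := isOpen_prod_iff.1 hW x y hxy
    obtain ⟨p, q, hp, hpq, hq, hsub⟩ := exists_rat_fst_preimage_Ioo_subset hU ⟨x, hxU⟩
    obtain ⟨y', hy'Q, hy'V⟩ := hQd.exists_mem_open hV ⟨y, hyV⟩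
    let j : J := (⟨(p, q), hp, hpq, hq⟩, ⟨y', hy'Q⟩)
    exact ⟨e j, hUV ⟨hsub (ht_Ioo j), hy'V⟩, j, rfl⟩
  · rintro _ ⟨j, rfl⟩ _ ⟨k, rfl⟩ h
    obtain ⟨r, hr⟩ := ht_mem j
    obtain ⟨s, hs⟩ := ht_mem k
    have htjk : t j = t k := congrArg fst h
    rw [← hr, ← hs] at htjk
    rw [hι (eq_of_ratCast_add_mul_sqrt_two_eq htjk)]

end DoubleArrow

theorem doubleArrow_prod_cantor_not_CDH : ¬ CDH (DoubleArrow × (ℕ → Bool)) := by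
  intro hCDH
  obtain ⟨Q, hQc, hQd⟩ := TopologicalSpace.exists_countable_dense (ℕ → Bool)
  obtain ⟨E, hEc, hEd, hEinj⟩ := DoubleArrow.exists_countable_dense_injOn_fst (ℕ → Bool)
  obtain ⟨⟨a, _⟩, haE⟩ := hEd.nonempty
  have hD : Dense ((Prod.fst '' E) ×ˢ Q) :=
    ((Prod.fst_surjective.denseRange).dense_image continuous_fst hEd).prod hQd
  obtain ⟨h, hh⟩ := hCDH ((Prod.fst '' E) ×ˢ Q) E ((hEc.image _).prod hQc) hD hEc hEd
  have hmem : ∀ y ∈ Q, h (a, y) ∈ E := fun y hy =>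
    hh ▸ mem_image_of_mem h ⟨⟨_, haE, rfl⟩, hy⟩
  obtain ⟨y₁, hy₁, y₂, hy₂, hne, hfst⟩ := exists_ne_map_eq_of_countable_range
    (f := fun y => (h (a, y)).1) (by fun_prop)
    (DoubleArrow.countable_range_of_continuous (by fun_prop)) hQd
  exact hne (congrArg Prod.snd (h.injective (hEinj (hmem y₁ hy₁) (hmem y₂ hy₂) hfst)))
end

section
/- The Sorgenfrey line contains no subspace homeomorphic to the Cantor set 2^ω. -/
/-!
A compact subset `K` of the Sorgenfrey line is countable: for `x ∈ K` the interval `(-∞, x)` is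
clopen, so `K ∩ (-∞, x)` is compact and (if nonempty) has a largest element, which leaves an empty
gap `(y, x)` in `K` to the left of `x`. These gaps are pairwise disjoint, so there are only
countably many of them. The Cantor space is compact and uncountable.
-/

open Set Topology

/-- The Sorgenfrey line: ℝ with the topology generated by half-open intervals [a,b). -/
def SorgenfreyLine : Type := ℝ

instance : TopologicalSpace SorgenfreyLine :=
  TopologicalSpace.generateFrom {s : Set ℝ | ∃ a b : ℝ, s = Set.Ico a b}

theorem Set.countable_of_forall_exists_Ioo_inter_eq_empty {α : Type*} [LinearOrder α]
    [TopologicalSpace α] [OrderTopology α] [SecondCountableTopology α] {s : Set α}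
    (h : ∀ x ∈ s, ∃ y < x, Ioo y x ∩ s = ∅) : s.Countable := by
  choose! y hy hgap using h
  have hdisj : s.PairwiseDisjoint fun x => Ioo (y x) x := by
    intro x hx x' hx' hne
    wlog hlt : x < x' generalizing x x'
    · exact (this hx' hx hne.symm ((Ne.lt_or_gt hne).resolve_left hlt)).symm
    have hxy : x ≤ y x' := not_lt.1 fun h => (hgap x' hx').subset ⟨⟨h, hlt⟩, hx⟩
    exact disjoint_left.2 fun u hu hu' => (hu.2.trans_le hxy).not_gt hu'.1
  -- `countable_of_Ioo` is about gaps to the right of the points, so it is applied in `αᵒᵈ`.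
  refine Set.PairwiseDisjoint.countable_of_Ioo (α := αᵒᵈ) (s := OrderDual.ofDual ⁻¹' s)
    (y := fun x => OrderDual.toDual (y (OrderDual.ofDual x))) ?_ fun x hx => hy x hx
  have hIoo (x : αᵒᵈ) : Ioo x (OrderDual.toDual (y (OrderDual.ofDual x))) =
      OrderDual.ofDual ⁻¹' Ioo (y (OrderDual.ofDual x)) (OrderDual.ofDual x) := ext fun _ => and_comm
  simp_rw [hIoo]
  exact hdisj

theorem uncountable_cantorSpace : Uncountable (ℕ → Bool) := by
  rw [← Cardinal.aleph0_lt_mk_iff]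
  simpa using Cardinal.aleph0_lt_continuum

namespace SorgenfreyLine

noncomputable instance : LinearOrder SorgenfreyLine := inferInstanceAs (LinearOrder ℝ)

instance : NoMinOrder SorgenfreyLine := inferInstanceAs (NoMinOrder ℝ)

instance : NoMaxOrder SorgenfreyLine := inferInstanceAs (NoMaxOrder ℝ)

theorem isOpen_Ico (a b : SorgenfreyLine) : IsOpen (Ico a b) :=
  TopologicalSpace.GenerateOpen.basic _ ⟨a, b, rfl⟩

theorem isOpen_Iio (b : SorgenfreyLine) : IsOpen (Iio b) :=
  iUnion_Ico_left b ▸ isOpen_iUnion fun a => isOpen_Ico a b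

theorem isOpen_Ici (a : SorgenfreyLine) : IsOpen (Ici a) :=
  iUnion_Ico_right a ▸ isOpen_iUnion (isOpen_Ico a)

theorem isClosed_Iio (a : SorgenfreyLine) : IsClosed (Iio a) := by
  rw [← isOpen_compl_iff, compl_Iio]
  exact isOpen_Ici a

instance : ClosedIciTopology SorgenfreyLine where
  isClosed_Ici a := by
    rw [← isOpen_compl_iff, compl_Ici]
    exact isOpen_Iio a

theorem exists_Ioo_inter_eq_empty_of_isCompact {K : Set SorgenfreyLine} (hK : IsCompact K)
    (x : SorgenfreyLine) : ∃ y < x, Ioo y x ∩ K = ∅ := by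
  by_cases hne : (K ∩ Iio x).Nonempty
  · obtain ⟨m, ⟨-, hmx⟩, hmax⟩ := (hK.inter_right (isClosed_Iio x)).exists_isGreatest hne
    exact ⟨m, hmx, eq_empty_of_forall_notMem fun z ⟨hz, hzK⟩ => (hmax ⟨hzK, hz.2⟩).not_gt hz.1⟩
  · obtain ⟨y, hy⟩ := exists_lt x
    exact ⟨y, hy, eq_empty_of_forall_notMem fun z ⟨hz, hzK⟩ => hne ⟨z, hzK, hz.2⟩⟩

theorem countable_of_isCompact {K : Set SorgenfreyLine} (hK : IsCompact K) : K.Countable :=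
  Set.countable_of_forall_exists_Ioo_inter_eq_empty (α := ℝ)
    fun x _ => exists_Ioo_inter_eq_empty_of_isCompact hK x

end SorgenfreyLine

theorem sorgenfrey_no_cantor_subspace :
    ∀ S : Set SorgenfreyLine, ¬ Nonempty ((ℕ → Bool) ≃ₜ S) := by
  rintro S ⟨e⟩
  have : CompactSpace S := e.compactSpace
  have : Countable S :=
    (SorgenfreyLine.countable_of_isCompact (isCompact_iff_compactSpace.mpr this)).to_subtype
  exact uncountable_cantorSpace.not_countable e.injective.countable
end
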